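/- arXiv:1312.1375 — 2 statements merged into one kernel-verified Lean document; each statement's English description precedes it below -/
import Mathlib

section
/- Let d₁, d₂, f₊, f₋, N be positive reals. Let H̃ be the 2×2 real matrix with rows (−d₁, d₂) and (d₁, −d₂), set σ² = N d₁ d₂/(d₁+d₂)² and n̄ = (f₊/f₋) · N d₁/(d₁+d₂), and let Ψ = σ² · (−1, 1) ∈ ℝ². If Σ₁₂ ∈ ℝ² satisfies (f₋ I − H̃) Σ₁₂ = f₊ Ψ, and Σ₂₂ = n̄ + (f₊/f₋) · (Σ₁₂)₂, then Σ₂₂ = n̄ + (f₊² / (f₋² + (d₁ + d₂) f₋)) · σ². -/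
open Matrix

/-- The steady-state variance computation of Example 2 (equation (22)) for the two-voxel
CAT-receiver network: with `σ² = N d₁ d₂/(d₁+d₂)²`, `n̄ = (f₊/f₋) N d₁/(d₁+d₂)` and
`Ψ = σ² (−1, 1)`, if `(f₋ I − H̃) S12 = f₊ Ψ` and `S22 = n̄ + (f₊/f₋) (S12)₂`, then
`S22 = n̄ + (f₊²/(f₋² + (d₁+d₂) f₋)) σ²`. -/
theorem two_voxel_cat_steady_state_variance (d₁ d₂ fp fm N : ℝ)
    (hd₁ : 0 < d₁) (hd₂ : 0 < d₂) (hfp : 0 < fp) (hfm : 0 < fm) (hN : 0 < N)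
    (S12 : Fin 2 → ℝ) (S22 : ℝ)
    (hS12 : (fm • (1 : Matrix (Fin 2) (Fin 2) ℝ) - Matrix.of ![![-d₁, d₂], ![d₁, -d₂]]).mulVec S12
      = fp • ((N * d₁ * d₂ / (d₁ + d₂) ^ 2) • ![(-1 : ℝ), 1]))
    (hS22 : S22 = (fp / fm) * (N * d₁ / (d₁ + d₂)) + (fp / fm) * S12 1) :
    S22 = (fp / fm) * (N * d₁ / (d₁ + d₂)) +
      (fp ^ 2 / (fm ^ 2 + (d₁ + d₂) * fm)) * (N * d₁ * d₂ / (d₁ + d₂) ^ 2) := by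
  have h0 := congrFun hS12 0
  have h1 := congrFun hS12 1
  simp [Matrix.mulVec, dotProduct, Fin.sum_univ_two, Matrix.one_apply] at h0 h1
  have hd : d₁ + d₂ ≠ 0 := by positivity
  have hfm' : fm ≠ 0 := hfm.ne'
  have hden : fm + d₁ + d₂ ≠ 0 := by positivity
  -- from h0 + h1: fm*(S12 0 + S12 1) = 0
  have hsum : S12 0 = -S12 1 := by
    have := congrArg₂ (· + ·) h0 h1
    field_simp at this ⊢
    nlinarith [this]
  have hy : S12 1 = fp * (N * d₁ * d₂ / (d₁ + d₂) ^ 2) / (fm + d₁ + d₂) := by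
    rw [hsum] at h1
    field_simp at h1 ⊢
    nlinarith [h1]
  rw [hS22, hy]
  field_simp
  ring
end

section
/- Let N, d₁, d₂, k₊, k₋ be positive reals and set r = k₊/k₋ and q_R = r/(1 + r + d₂/d₁). Define n̄_RC = N q_R, σ²_RC = N q_R (1 − q_R), n̄_CAT = r · N d₁/(d₁ + d₂), and σ²_CAT = n̄_CAT + (k₊²/(k₋² + (d₁+d₂)k₋)) · N d₁ d₂/(d₁+d₂)². Then σ²_CAT > n̄_CAT > n̄_RC > σ²_RC. -/
/-! The RC output is binomial, so its variance `N q_R (1 - q_R)` falls short of its mean by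
`N q_R² > 0`; the CAT variance exceeds its mean by a manifestly positive term. The two means
differ only through the term `r` in the denominator of `q_R = r / (1 + r + d₂/d₁)`, which
`n̄_CAT = N r / (1 + d₂/d₁)` lacks. -/

lemma mul_mul_one_sub_lt {N q : ℝ} (hN : 0 < N) (hq : 0 < q) : N * q * (1 - q) < N * q := by
  nlinarith [mul_pos hN (mul_pos hq hq)]

lemma div_one_add_add_div_lt {r a b : ℝ} (hr : 0 < r) (ha : 0 < a) (hb : 0 < b) :
    r / (1 + r + b / a) < r * a / (a + b) :=
  calc r / (1 + r + b / a) < r / (1 + b / a) :=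
        div_lt_div_of_pos_left hr (by positivity) (by linarith)
    _ = r * a / (a + b) := by field_simp

/-- Comparison of the steady-state RC and CAT receiver outputs in the two-voxel network
(Example 2): with `r = k₊/k₋`, `q_R = r/(1 + r + d₂/d₁)`, `n̄_RC = N q_R`,
`σ²_RC = N q_R (1 − q_R)`, `n̄_CAT = r N d₁/(d₁+d₂)` and
`σ²_CAT = n̄_CAT + (k₊²/(k₋² + (d₁+d₂)k₋)) N d₁ d₂/(d₁+d₂)²`, we have
`σ²_CAT > n̄_CAT > n̄_RC > σ²_RC`. -/
theorem rc_cat_comparison (N d₁ d₂ kp km : ℝ)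
    (hN : 0 < N) (hd₁ : 0 < d₁) (hd₂ : 0 < d₂) (hkp : 0 < kp) (hkm : 0 < km) :
    let r := kp / km
    let qR := r / (1 + r + d₂ / d₁)
    let nRC := N * qR
    let vRC := N * qR * (1 - qR)
    let nCAT := r * (N * d₁ / (d₁ + d₂))
    let vCAT := nCAT + (kp ^ 2 / (km ^ 2 + (d₁ + d₂) * km)) * (N * d₁ * d₂ / (d₁ + d₂) ^ 2)
    vCAT > nCAT ∧ nCAT > nRC ∧ nRC > vRC := by
  intro r qR nRC vRC nCAT vCAT
  have hr : 0 < r := div_pos hkp hkm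
  refine ⟨?_, ?_, mul_mul_one_sub_lt hN (by positivity)⟩
  · have hextra : 0 < kp ^ 2 / (km ^ 2 + (d₁ + d₂) * km) * (N * d₁ * d₂ / (d₁ + d₂) ^ 2) := by
      positivity
    exact lt_add_of_pos_right nCAT hextra
  · calc nRC < N * (r * d₁ / (d₁ + d₂)) :=
          mul_lt_mul_of_pos_left (div_one_add_add_div_lt hr hd₁ hd₂) hN
      _ = nCAT := by ring
end
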